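/- For every set of formulas Γ and every formula α: α is a relational HT-consequence of Γ if and only if α is an algebraic consequence of Γ (Γ ⊨_Rel α iff Γ ⊨_Alg α). -/

import Mathlib

/-- A HT-algebra: a Heyting algebra with unary operations `S 0` (= S₁), `S 1` (= S₂)
satisfying (HT2)–(HT7).  (Note: in a Heyting algebra, ¬a = a ⇨ ⊥ = aᶜ.) -/
structure HTAlgebra (A : Type*) [HeytingAlgebra A] where
  S : Fin 2 → A → A
  /-- (HT2) each Sᵢ preserves ∧ -/
  S_inf : ∀ i a b, S i (a ⊓ b) = S i a ⊓ S i b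
  /-- (HT2) each Sᵢ preserves ∨ -/
  S_sup : ∀ i a b, S i (a ⊔ b) = S i a ⊔ S i b
  /-- (HT3) S₂(a ⇒ b) = S₂a ⇒ S₂b -/
  S2_himp : ∀ a b, S 1 (a ⇨ b) = S 1 a ⇨ S 1 b
  /-- (HT4) S₁(a ⇒ b) = (S₁a ⇒ S₁b) ∧ (S₂a ⇒ S₂b) -/
  S1_himp : ∀ a b, S 0 (a ⇨ b) = (S 0 a ⇨ S 0 b) ⊓ (S 1 a ⇨ S 1 b)
  /-- (HT5) SᵢSⱼa = Sⱼa -/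
  S_S : ∀ i j a, S i (S j a) = S j a
  /-- (HT6) S₁a ∨ a = a -/
  S1_sup_self : ∀ a, S 0 a ⊔ a = a
  /-- (HT7) S₁a ∨ ¬S₁a = 1 -/
  S1_lem : ∀ a, S 0 a ⊔ (S 0 a)ᶜ = ⊤

/-- A HT-frame on a (nonempty) set of states `W`: a preorder `R` together with
functions `s 0` (= s₁), `s 1` (= s₂) satisfying (K1)–(K6). -/
structure HTFrame (W : Type*) where
  R : W → W → Prop
  s : Fin 2 → W → W
  /-- (K1) R is reflexive -/
  refl : ∀ w, R w w
  /-- (K1) R is transitive -/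
  trans : ∀ w w' w'', R w w' → R w' w'' → R w w''
  /-- (K2) sⱼ(sᵢ(w)) = sⱼ(w) -/
  s_s : ∀ i j w, s j (s i w) = s j w
  /-- (K3) R(s₁(w), w) -/
  K3 : ∀ w, R (s 0 w) w
  /-- (K4) R(w, s₂(w)) -/
  K4 : ∀ w, R w (s 1 w)
  /-- (K5) R(w,w') implies R(sᵢ(w),sᵢ(w')) and R(sᵢ(w'),sᵢ(w)) -/
  K5 : ∀ i w w', R w w' → R (s i w) (s i w') ∧ R (s i w') (s i w)
  /-- (K6) every state is in the image of some sᵢ -/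
  K6 : ∀ w, ∃ (i : Fin 2) (w' : W), w = s i w'

/-- Formulas: propositional variables (indexed by ℕ) combined with
∧, ∨, ⇒, ¬ and the unary connectives S₁ (= S 0), S₂ (= S 1). -/
inductive Fml : Type
  | var : ℕ → Fml
  | and : Fml → Fml → Fml
  | or : Fml → Fml → Fml
  | imp : Fml → Fml → Fml
  | neg : Fml → Fml
  | S : Fin 2 → Fml → Fml

/-- A HT-model: a HT-frame together with a hereditary meaning function on
propositional variables. -/
structure HTModel (W : Type*) extends HTFrame W where
  m : ℕ → Set W
  her_at : ∀ p w w', R w w' → w ∈ m p → w' ∈ m p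

/-- Satisfaction of a formula at a state of a HT-model. -/
def Sat {W : Type*} (M : HTModel W) : Fml → W → Prop
  | .var p => fun w => w ∈ M.m p
  | .and α β => fun w => Sat M α w ∧ Sat M β w
  | .or α β => fun w => Sat M α w ∨ Sat M β w
  | .imp α β => fun w => ∀ w', M.R w w' → Sat M α w' → Sat M β w'
  | .neg α => fun w => ∀ w', M.R w w' → ¬ Sat M α w'
  | .S i α => fun w => Sat M α (M.s i w)

/-- A homomorphism from formulas into a HT-algebra: a map preserving
∧, ∨, ⇒, ¬, S₁, S₂. -/
def IsHom {A : Type*} [HeytingAlgebra A] (H : HTAlgebra A) (h : Fml → A) : Prop :=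
  (∀ α β, h (.and α β) = h α ⊓ h β) ∧
  (∀ α β, h (.or α β) = h α ⊔ h β) ∧
  (∀ α β, h (.imp α β) = h α ⇨ h β) ∧
  (∀ α, h (.neg α) = (h α)ᶜ) ∧
  (∀ (i : Fin 2) α, h (.S i α) = H.S i (h α))

/-- α is an algebraic consequence of Γ: in every algebraic model (A, h) in
which all formulas of Γ are true (h(γ) = 1), α is true (h(α) = 1). -/
def AlgConsequence (Γ : Set Fml) (α : Fml) : Prop :=
  ∀ (A : Type) (_ : HeytingAlgebra A) (H : HTAlgebra A) (h : Fml → A),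
    IsHom H h → (∀ γ ∈ Γ, h γ = ⊤) → h α = ⊤

/-- α is a relational HT-consequence of Γ: in every HT-model in which all
formulas of Γ are true, α is true. -/
def RelConsequence (Γ : Set Fml) (α : Fml) : Prop :=
  ∀ (W : Type) (_ : Nonempty W) (M : HTModel W),
    (∀ γ ∈ Γ, ∀ w, Sat M γ w) → ∀ w, Sat M α w

/-!
Soundness: the hereditary subsets of an HT-frame, with `Sᵢ U = sᵢ⁻¹ U`, form an HT-algebra
in which the truth sets of formulas are the values of a homomorphism.

Completeness: the prime filters of an HT-algebra, ordered by inclusion and with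
`sᵢ F = Sᵢ⁻¹ F`, form an HT-frame whose truth sets are given by membership of `h φ`, and
`h α ≠ ⊤` is witnessed by a prime filter omitting `h α`. The only delicate axiom is (K6): a
prime filter not closed under `S₁` contains some `c` with `S₁ c = ⊥`, and such a `c` satisfies
`c ⊓ S₂ a ≤ a`, which makes the filter a fixed point of `s₂`.
-/

open Order

namespace HTFrame

variable {W : Type*} (K : HTFrame W)

lemma exists_s_eq_self (w : W) : ∃ i, K.s i w = w := by
  obtain ⟨i, u, rfl⟩ := K.K6 w
  exact ⟨i, K.s_s i i u⟩

lemma R_s_zero_s_one (w : W) : K.R (K.s 0 w) (K.s 1 w) :=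
  K.trans _ _ _ (K.K3 w) (K.K4 w)

lemma R_of_R_s_one {w v : W} (h : K.R (K.s 1 w) v) : K.R v (K.s 1 w) := by
  obtain ⟨i, hi⟩ := K.exists_s_eq_self v
  have hback := (K.K5 i _ _ h).2
  rw [hi, K.s_s] at hback
  fin_cases i
  · exact K.trans _ _ _ hback (K.R_s_zero_s_one w)
  · exact hback

def IsHereditary (U : Set W) : Prop := ∀ ⦃w w'⦄, K.R w w' → w ∈ U → w' ∈ U

def Hereditary : Type _ := {U : Set W // K.IsHereditary U}

instance : Lattice K.Hereditary :=
  Subtype.lattice (fun _ _ hU hV _ _ hR => Or.imp (hU hR) (hV hR))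
    (fun _ _ hU hV _ _ hR hw => ⟨hU hR hw.1, hV hR hw.2⟩)

instance : HeytingAlgebra K.Hereditary where
  top := ⟨Set.univ, fun _ _ _ _ => trivial⟩
  le_top U := Set.subset_univ U.1
  bot := ⟨∅, fun _ _ _ h => h⟩
  bot_le U := Set.empty_subset U.1
  himp U V := ⟨{w | ∀ w', K.R w w' → w' ∈ U.1 → w' ∈ V.1},
    fun _ _ hR hw w'' hR' => hw w'' (K.trans _ _ _ hR hR')⟩
  le_himp_iff U _ _ := ⟨fun h w hw => h hw.1 w (K.refl w) hw.2,
    fun h _ hw _ hR hV => h ⟨U.2 hR hw, hV⟩⟩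
  compl U := ⟨{w | ∀ w', K.R w w' → w' ∉ U.1},
    fun _ _ hR hw w'' hR' => hw w'' (K.trans _ _ _ hR hR')⟩
  himp_bot _ := rfl

def complexAlgebra : HTAlgebra K.Hereditary where
  S i U := ⟨K.s i ⁻¹' U.1, fun _ _ hR hw => U.2 (K.K5 i _ _ hR).1 hw⟩
  S_inf _ _ _ := rfl
  S_sup _ _ _ := rfl
  S2_himp U V := Subtype.ext <| Set.ext fun w =>
    ⟨fun hw _ hR hU => hw _ (K.K5 1 _ _ hR).1 hU,
      fun hw _ hR hU => V.2 hR (hw w (K.refl w) (U.2 (K.R_of_R_s_one hR) hU))⟩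
  S1_himp U V := Subtype.ext <| Set.ext fun w => by
    refine ⟨fun hw => ⟨fun w' hR hU => hw _ (K.K5 0 _ _ hR).1 hU,
      fun w' hR hU => hw _ (K.trans _ _ _ (K.K3 w) (K.trans _ _ _ hR (K.K4 w'))) hU⟩,
      fun ⟨h0, h1⟩ v hR hU => ?_⟩
    have hS : ∀ i, K.s i w ∈ U.1 → K.s i w ∈ V.1 :=
      Fin.forall_fin_two.2 ⟨h0 w (K.refl w), h1 w (K.refl w)⟩
    obtain ⟨i, hi⟩ := K.exists_s_eq_self v
    have hRi := K.K5 i _ _ hR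
    rw [K.s_s, hi] at hRi
    exact V.2 hRi.1 (hS i (U.2 hRi.2 hU))
  S_S i j U := Subtype.ext <| Set.ext fun w => by
    change K.s j (K.s i w) ∈ U.1 ↔ K.s j w ∈ U.1
    rw [K.s_s]
  S1_sup_self U := sup_eq_right.2 fun w hw => U.2 (K.K3 w) hw
  S1_lem U := top_le_iff.1 fun w _ =>
    (em (K.s 0 w ∈ U.1)).imp_right fun hU _ hR hw' => hU (U.2 (K.K5 0 _ _ hR).2 hw')

end HTFrame

namespace HTModel

variable {W : Type*} (M : HTModel W)

lemma sat_of_R (φ : Fml) {w w' : W} (h : M.R w w') (hw : Sat M φ w) : Sat M φ w' := by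
  induction φ generalizing w w' with
  | var p => exact M.her_at p w w' h hw
  | and α β ihα ihβ => exact ⟨ihα h hw.1, ihβ h hw.2⟩
  | or α β ihα ihβ => exact hw.imp (ihα h) (ihβ h)
  | imp α β => exact fun w'' h' => hw w'' (M.trans _ _ _ h h')
  | neg α => exact fun w'' h' => hw w'' (M.trans _ _ _ h h')
  | S i α ih => exact ih (M.K5 i _ _ h).1 hw

def truthSet (φ : Fml) : M.toHTFrame.Hereditary :=
  ⟨{w | Sat M φ w}, fun _ _ h => M.sat_of_R φ h⟩

lemma isHom_truthSet : IsHom M.complexAlgebra M.truthSet :=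
  ⟨fun _ _ => rfl, fun _ _ => rfl, fun _ _ => rfl, fun _ => rfl, fun _ _ => rfl⟩

lemma truthSet_eq_top_iff (φ : Fml) : M.truthSet φ = ⊤ ↔ ∀ w, Sat M φ w :=
  Subtype.ext_iff.trans Set.eq_univ_iff_forall

end HTModel

namespace Order.PFilter

variable {α β F : Type*}

def comap [SemilatticeInf α] [OrderTop α] [SemilatticeInf β] [OrderTop β] [FunLike F α β]
    [InfTopHomClass F α β] (f : F) (G : PFilter β) : PFilter α :=
  IsPFilter.toPFilter (F := f ⁻¹' G) <| IsPFilter.of_def ⟨⊤, by simp⟩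
    (fun a ha b hb => ⟨a ⊓ b, show f (a ⊓ b) ∈ G by rw [map_inf]; exact G.inf_mem ha hb,
      inf_le_left, inf_le_right⟩)
    (fun hxy hx => G.mem_of_le (OrderHomClass.mono f hxy) hx)

@[simp]
lemma mem_comap [SemilatticeInf α] [OrderTop α] [SemilatticeInf β] [OrderTop β] [FunLike F α β]
    [InfTopHomClass F α β] {f : F} {G : PFilter β} {a : α} : a ∈ G.comap f ↔ f a ∈ G :=
  Iff.rfl

lemma IsPrime.bot_notMem [Preorder α] [OrderBot α] {G : PFilter α} (hG : G.IsPrime) :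
    ⊥ ∉ G :=
  hG.compl_ideal.toIdeal.bot_mem

lemma IsPrime.mem_or_mem [SemilatticeSup α] {G : PFilter α} (hG : G.IsPrime) {a b : α}
    (h : a ⊔ b ∈ G) : a ∈ G ∨ b ∈ G := by
  by_contra! hab
  exact hG.compl_ideal.toIdeal.sup_mem hab.1 hab.2 h

lemma IsPrime.comap [Lattice α] [BoundedOrder α] [Lattice β] [BoundedOrder β] [FunLike F α β]
    [BoundedLatticeHomClass F α β] (f : F) {G : PFilter β} (hG : G.IsPrime) :
    (G.comap f).IsPrime where
  compl_ideal :=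
    ⟨fun _ _ hba ha hb => ha (G.mem_of_le (OrderHomClass.mono f hba) hb),
      ⟨⊥, by simpa using hG.bot_notMem⟩,
      fun a ha b hb => ⟨a ⊔ b, fun h => (hG.mem_or_mem (by simpa using h)).elim ha hb,
        le_sup_left, le_sup_right⟩⟩

lemma exists_isPrime_le_notMem [DistribLattice α] {G : PFilter α} {b : α} (hb : b ∉ G) :
    ∃ P : PFilter α, P.IsPrime ∧ G ≤ P ∧ b ∉ P := by
  have hdisj : Disjoint (G : Set α) (Ideal.principal b) :=
    Set.disjoint_left.2 fun _ ha hab => hb (G.mem_of_le hab ha)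
  obtain ⟨J, hJ, hbJ, hGJ⟩ := DistribLattice.prime_ideal_of_disjoint_filter_ideal hdisj
  exact ⟨hJ.toPrimePair.F, hJ.toPrimePair.F_isPrime, fun _ ha => Set.disjoint_left.1 hGJ ha,
    fun h => h (Ideal.principal_le_iff.1 hbJ)⟩

lemma exists_isPrime_notMem [DistribLattice α] [OrderTop α] {b : α} (hb : b ≠ ⊤) :
    ∃ P : PFilter α, P.IsPrime ∧ b ∉ P := by
  obtain ⟨P, hP, -, hbP⟩ :=
    exists_isPrime_le_notMem (G := principal ⊤) (b := b) (by rwa [mem_principal, top_le_iff])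
  exact ⟨P, hP, hbP⟩

lemma himp_mem_iff [HeytingAlgebra α] {G : PFilter α} {a b : α} :
    a ⇨ b ∈ G ↔ ∀ P : PFilter α, P.IsPrime → G ≤ P → a ∈ P → b ∈ P := by
  refine ⟨fun h P _ hGP ha => P.mem_of_le himp_inf_le (P.inf_mem (hGP h) ha), fun h => ?_⟩
  by_contra hab
  let himpLeft : InfTopHom α α :=
    { toFun := (a ⇨ ·), map_inf' := himp_inf_distrib a, map_top' := himp_top }
  obtain ⟨P, hP, hGP, hbP⟩ := exists_isPrime_le_notMem (G := G.comap himpLeft) hab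
  refine hbP (h P hP (fun x hx => hGP (G.mem_of_le le_himp hx)) (hGP ?_))
  simp [himpLeft]

end Order.PFilter

namespace HTAlgebra

variable {A : Type*} [HeytingAlgebra A] (H : HTAlgebra A)

lemma S_mono (i : Fin 2) : Monotone (H.S i) := fun a b hab => by
  rw [← inf_eq_left, ← H.S_inf, inf_eq_left.2 hab]

lemma S_zero_le (a : A) : H.S 0 a ≤ a :=
  sup_eq_right.1 (H.S1_sup_self a)

lemma eq_top_of_S_zero_eq_top {a : A} (h : H.S 0 a = ⊤) : a = ⊤ :=
  top_le_iff.1 (h ▸ H.S_zero_le a)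

lemma S_top (i : Fin 2) : H.S i ⊤ = ⊤ := by
  have h0 : H.S 0 (⊤ : A) = ⊤ := by simpa using H.S1_himp ⊤ ⊤
  simpa only [h0] using H.S_S i 0 ⊤

lemma S_bot (i : Fin 2) : H.S i ⊥ = ⊥ := by
  have h0 : H.S 0 (⊥ : A) = ⊥ := le_bot_iff.1 (H.S_zero_le ⊥)
  simpa only [h0] using H.S_S i 0 ⊥

lemma S_zero_le_S_one (a : A) : H.S 0 a ≤ H.S 1 a := by
  simpa only [H.S_S] using H.S_mono 1 (H.S_zero_le a)

lemma le_S_one (a : A) : a ≤ H.S 1 a :=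
  himp_eq_top_iff.1 <| H.eq_top_of_S_zero_eq_top <| by
    rw [H.S1_himp, H.S_S, H.S_S, himp_self, inf_top_eq, himp_eq_top_iff.2 (H.S_zero_le_S_one a)]

lemma inf_S_one_le_of_S_zero_eq_bot {c : A} (hc : H.S 0 c = ⊥) (a : A) : c ⊓ H.S 1 a ≤ a :=
  le_himp_iff.1 <| himp_eq_top_iff.1 <| H.eq_top_of_S_zero_eq_top <| by
    rw [H.S1_himp, hc, bot_himp, H.S2_himp, H.S_S, himp_self, himp_top, inf_top_eq]

lemma S_zero_compl_S_zero (a : A) : H.S 0 (H.S 0 a)ᶜ = (H.S 0 a)ᶜ := by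
  rw [← himp_bot, H.S1_himp, H.S_S, H.S_S, H.S_bot, H.S_bot, inf_idem]

lemma S_sup_compl (i : Fin 2) (a : A) : H.S i a ⊔ (H.S i a)ᶜ = ⊤ := by
  simpa only [H.S_S] using H.S1_lem (H.S i a)

def toBoundedLatticeHom (i : Fin 2) : BoundedLatticeHom A A where
  toFun := H.S i
  map_sup' := H.S_sup i
  map_inf' := H.S_inf i
  map_top' := H.S_top i
  map_bot' := H.S_bot i

section PrimeFilter

open PFilter

variable {G G' : PFilter A}

lemma S_mem_iff_of_le (hG : G.IsPrime) (hG' : G'.IsPrime) (hle : G ≤ G') (i : Fin 2) (a : A) :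
    H.S i a ∈ G ↔ H.S i a ∈ G' := by
  refine ⟨fun h => hle h, fun h => ?_⟩
  have hlem : H.S i a ⊔ (H.S i a)ᶜ ∈ G := H.S_sup_compl i a ▸ G.top_mem
  refine (hG.mem_or_mem hlem).resolve_right fun hc => hG'.bot_notMem ?_
  rw [← inf_compl_self (H.S i a)]
  exact G'.inf_mem h (hle hc)

lemma exists_S_mem_iff (hG : G.IsPrime) : ∃ i, ∀ a, H.S i a ∈ G ↔ a ∈ G := by
  by_cases hclosed : ∀ x ∈ G, H.S 0 x ∈ G
  · exact ⟨0, fun a => ⟨G.mem_of_le (H.S_zero_le a), hclosed a⟩⟩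
  push Not at hclosed
  obtain ⟨x, hx, hSx⟩ := hclosed
  have hcompl : (H.S 0 x)ᶜ ∈ G :=
    (hG.mem_or_mem (H.S1_lem x ▸ G.top_mem)).resolve_left hSx
  have hc : H.S 0 ((H.S 0 x)ᶜ ⊓ x) = ⊥ := by
    rw [H.S_inf, H.S_zero_compl_S_zero, inf_comm, inf_compl_self]
  refine ⟨1, fun a => ⟨fun ha => ?_, G.mem_of_le (H.le_S_one a)⟩⟩
  exact G.mem_of_le (H.inf_S_one_le_of_S_zero_eq_bot hc a) (G.inf_mem (G.inf_mem hcompl hx) ha)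

def canonicalFrame : HTFrame {G : PFilter A // G.IsPrime} where
  R G G' := G.1 ≤ G'.1
  s i G := ⟨G.1.comap (H.toBoundedLatticeHom i), G.2.comap _⟩
  refl _ := le_rfl
  trans _ _ _ := le_trans
  s_s i j G := Subtype.ext <| SetLike.ext fun a => by
    change H.S i (H.S j a) ∈ G.1 ↔ H.S j a ∈ G.1
    rw [H.S_S]
  K3 G a := G.1.mem_of_le (H.S_zero_le a)
  K4 G a := G.1.mem_of_le (H.le_S_one a)
  K5 i G G' hle :=
    ⟨fun a => (H.S_mem_iff_of_le G.2 G'.2 hle i a).1,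
      fun a => (H.S_mem_iff_of_le G.2 G'.2 hle i a).2⟩
  K6 G := by
    obtain ⟨i, hi⟩ := H.exists_S_mem_iff G.2
    exact ⟨i, G, Subtype.ext <| SetLike.ext fun a => (hi a).symm⟩

def canonicalModel (h : Fml → A) : HTModel {G : PFilter A // G.IsPrime} :=
  { H.canonicalFrame with
    m := fun p => {G | h (.var p) ∈ G.1}
    her_at := fun _ _ _ hle hp => hle hp }

lemma sat_canonicalModel_iff {h : Fml → A} (hh : IsHom H h) (φ : Fml)
    (G : {G : PFilter A // G.IsPrime}) : Sat (H.canonicalModel h) φ G ↔ h φ ∈ G.1 := by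
  obtain ⟨h_and, h_or, h_imp, h_neg, h_S⟩ := hh
  induction φ generalizing G with
  | var p => rfl
  | and α β ihα ihβ => rw [h_and, inf_mem_iff, ← ihα, ← ihβ]; rfl
  | or α β ihα ihβ =>
    rw [h_or]
    exact ⟨fun hs => hs.elim (fun hα => G.1.mem_of_le le_sup_left ((ihα G).1 hα))
      (fun hβ => G.1.mem_of_le le_sup_right ((ihβ G).1 hβ)),
      fun hmem => (G.2.mem_or_mem hmem).imp (ihα G).2 (ihβ G).2⟩
  | imp α β ihα ihβ =>
    rw [h_imp, himp_mem_iff]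
    exact ⟨fun hs P hP hle hα => (ihβ ⟨P, hP⟩).1 (hs ⟨P, hP⟩ hle ((ihα ⟨P, hP⟩).2 hα)),
      fun hmem P hle hα => (ihβ P).2 (hmem P.1 P.2 hle ((ihα P).1 hα))⟩
  | neg α ihα =>
    rw [h_neg, ← himp_bot, himp_mem_iff]
    exact ⟨fun hs P hP hle hα => absurd ((ihα ⟨P, hP⟩).2 hα) (hs ⟨P, hP⟩ hle),
      fun hmem P hle hα => P.2.bot_notMem (hmem P.1 P.2 hle ((ihα P).1 hα))⟩
  | S i α ih =>
    rw [h_S]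
    exact ih _

end PrimeFilter

end HTAlgebra

/-- Theorem 5.5: α is a relational HT-consequence of Γ iff α is an algebraic
consequence of Γ. -/
theorem stmt_16 (Γ : Set Fml) (α : Fml) :
    RelConsequence Γ α ↔ AlgConsequence Γ α := by
  constructor
  · intro hrel A _ H h hh hΓ
    by_contra hα
    obtain ⟨G, hG, hαG⟩ := PFilter.exists_isPrime_notMem hα
    have hsat := hrel _ ⟨⟨G, hG⟩⟩ (H.canonicalModel h)
      (fun γ hγ P => (H.sat_canonicalModel_iff hh γ P).2 (hΓ γ hγ ▸ P.1.top_mem)) ⟨G, hG⟩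
    exact hαG ((H.sat_canonicalModel_iff hh α ⟨G, hG⟩).1 hsat)
  · intro halg W _ M hΓ
    rw [← M.truthSet_eq_top_iff]
    exact halg _ _ M.complexAlgebra M.truthSet M.isHom_truthSet
      fun γ hγ => (M.truthSet_eq_top_iff γ).2 (hΓ γ hγ)
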